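/- arXiv:1308.2261 — 2 statements merged into one kernel-verified Lean document; each statement's English description precedes it below -/
import Mathlib

section
/- Let p be a prime and let f be a formal power series in one variable over ℤ_p whose constant coefficient is 1 and such that every coefficient of f − 1 is divisible by p. Then there exists a function F from ℤ_p to the ring of formal power series over ℤ_p such that: (i) F(k) = f^k for every natural number k; (ii) F(s + t) = F(s)·F(t) for all s, t in ℤ_p; and (iii) for every natural number n, the map sending s ∈ ℤ_p to the n-th coefficient of F(s) is a continuous function from ℤ_p to ℤ_p. -/
/-!
Write `f = 1 + g` with `constantCoeff g = 0` and take `F s = (1 + g) ^ s`, the binomial series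
`∑ⱼ (s choose j) • Xʲ` with `g` substituted for `X`. Since `g ^ j` has order at least `j`, the
`n`-th coefficient of `F s` is the finite sum `∑_{j ≤ n} (s choose j) • coeff n (g ^ j)`, which is
continuous in `s` because `s ↦ (s choose j)` is continuous on `ℤ_[p]`. Multiplicativity is
Vandermonde's identity for the binomial series, transported by the ring homomorphism of substitution.
-/

open Finset

namespace PowerSeries

variable {R A : Type*} [CommRing R] [CommRing A] [Algebra R A]

theorem coeff_pow_eq_zero_of_lt {g : A⟦X⟧} (hg : constantCoeff g = 0) {n d : ℕ} (h : n < d) :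
    coeff n (g ^ d) = 0 :=
  X_pow_dvd_iff.mp (pow_dvd_pow_of_dvd (X_dvd_iff.mpr hg) d) n h

theorem coeff_subst_eq_sum_range {g : A⟦X⟧} (hg : constantCoeff g = 0) (φ : R⟦X⟧) (n : ℕ) :
    coeff n (φ.subst g) = ∑ d ∈ range (n + 1), coeff d φ • coeff n (g ^ d) := by
  rw [coeff_subst' (HasSubst.of_constantCoeff_zero' hg)]
  refine finsum_eq_sum_of_support_subset _ fun d hd => mem_coe.mpr (mem_range.mpr ?_)
  by_contra! hdn
  exact hd (by dsimp only; rw [coeff_pow_eq_zero_of_lt hg (by omega), smul_zero])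

variable [BinomialRing R]

/-- `(1 + g) ^ s`; meaningful only when `constantCoeff g = 0`, otherwise `subst` returns junk. -/
noncomputable def onePlusPow (g : A⟦X⟧) (s : R) : A⟦X⟧ :=
  (binomialSeries A s).subst g

variable {g : A⟦X⟧}

theorem onePlusPow_add (hg : constantCoeff g = 0) (s t : R) :
    onePlusPow g (s + t) = onePlusPow g s * onePlusPow g t := by
  rw [onePlusPow, binomialSeries_add, subst_mul (HasSubst.of_constantCoeff_zero' hg)]
  rfl

theorem onePlusPow_natCast (hg : constantCoeff g = 0) (k : ℕ) :
    onePlusPow g (k : R) = (1 + g) ^ k := by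
  rw [onePlusPow, binomialSeries_nat, ← coe_substAlgHom (HasSubst.of_constantCoeff_zero' hg),
    map_pow, map_add, map_one, substAlgHom_X]

theorem coeff_onePlusPow (hg : constantCoeff g = 0) (s : R) (n : ℕ) :
    coeff n (onePlusPow g s) = ∑ d ∈ range (n + 1), Ring.choose s d • coeff n (g ^ d) := by
  simp only [onePlusPow, coeff_subst_eq_sum_range hg, binomialSeries_coeff, smul_assoc, one_smul]

end PowerSeries

open PowerSeries

theorem PadicInt.continuous_coeff_onePlusPow {p : ℕ} [Fact p.Prime] {g : ℤ_[p]⟦X⟧}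
    (hg : constantCoeff g = 0) (n : ℕ) :
    Continuous fun s : ℤ_[p] => coeff n (onePlusPow g s) := by
  simp only [coeff_onePlusPow hg, smul_eq_mul]
  exact continuous_finsetSum _ fun d _ => (continuous_choose d).mul continuous_const

theorem stmt1_general (p : ℕ) [Fact p.Prime] (f : PowerSeries ℤ_[p])
    (hconst : PowerSeries.constantCoeff (R := ℤ_[p]) f = 1) :
    ∃ F : ℤ_[p] → PowerSeries ℤ_[p],
      (∀ k : ℕ, F (k : ℤ_[p]) = f ^ k) ∧
      (∀ s t : ℤ_[p], F (s + t) = F s * F t) ∧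
      (∀ n : ℕ, Continuous fun s : ℤ_[p] => PowerSeries.coeff (R := ℤ_[p]) n (F s)) := by
  have hg : constantCoeff (f - 1) = 0 := by rw [map_sub, hconst, map_one, sub_self]
  refine ⟨onePlusPow (f - 1), fun k => ?_, onePlusPow_add hg,
    PadicInt.continuous_coeff_onePlusPow hg⟩
  rw [onePlusPow_natCast hg, add_sub_cancel]

/-- for `f ∈ ℤ_p[[X]]` with constant coefficient `1` and `f ≡ 1 mod p`,
there is a family `F : ℤ_p → ℤ_p[[X]]` with `F k = f^k` for `k ∈ ℕ`,
`F (s+t) = F s · F t`, and each coefficient of `F s` continuous in `s`. -/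
theorem stmt1 (p : ℕ) [Fact p.Prime] (f : PowerSeries ℤ_[p])
    (hconst : PowerSeries.constantCoeff (R := ℤ_[p]) f = 1)
    (hcong : ∀ n : ℕ, (p : ℤ_[p]) ∣ PowerSeries.coeff (R := ℤ_[p]) n (f - 1)) :
    ∃ F : ℤ_[p] → PowerSeries ℤ_[p],
      (∀ k : ℕ, F (k : ℤ_[p]) = f ^ k) ∧
      (∀ s t : ℤ_[p], F (s + t) = F s * F t) ∧
      (∀ n : ℕ, Continuous fun s : ℤ_[p] => PowerSeries.coeff (R := ℤ_[p]) n (F s)) :=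
  stmt1_general p f hconst
end

section
/- Let p be a prime and let u be an element of ℤ_p with 2p dividing u − 1 and u ≠ 1. For a formal power series F over ℤ_p with coefficients a_0, a_1, … and for z ∈ ℤ_p divisible by p, write F(z) for the sum of the convergent series ∑_n a_n·z^n. If F and G are two formal power series over ℤ_p such that F(u^k − 1) = G(u^k − 1) for infinitely many natural numbers k, then F = G. -/
/-!
Let `H = F - G`. Over `ℚ_[p]` its coefficients are bounded, so `H` converges on the open unit
ball, and it vanishes at the points `u ^ k - 1` for infinitely many `k`; these lie in the compact
ball of radius `‖2p‖ < 1/2`. They are pairwise distinct because `u` is not a root of unity: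
in `u ^ m - 1 = (u - 1) ∑_{i<m} u ^ i` the geometric sum is a unit when `p ∤ m`, and for `m = p`
it is `≡ p` modulo `p ^ 2` (this is where `2 ∣ (u - 1) / p` is needed when `p = 2`), so one can
induct on the power of `p` in `m`. Hence the zeros accumulate at some `z₀` with `‖z₀‖ < 1/2`;
by the isolated zeros principle `H` vanishes near `z₀`, and re-expanding at `z₀` shows that it
vanishes on a ball around `z₀` containing `0`, so all its coefficients are `0`.
-/

open Filter Topology Metric Finset
open scoped NNReal ENNReal

namespace FormalMultilinearSeries

variable {𝕜 E : Type*} [NontriviallyNormedField 𝕜] [ProperSpace 𝕜] [NormedAddCommGroup E]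
  [NormedSpace 𝕜 E] [CompleteSpace E]

theorem eq_zero_of_infinite_zeros (P : FormalMultilinearSeries 𝕜 𝕜 E) {ρ : ℝ≥0}
    (hρ : 2 * (ρ : ℝ≥0∞) < P.radius) {Z : Set 𝕜} (hZ : Z.Infinite)
    (hZρ : Z ⊆ closedBall 0 ρ) (hPZ : ∀ z ∈ Z, P.sum z = 0) : P = 0 := by
  obtain ⟨z₀, hz₀, hacc⟩ := hZ.exists_accPt_of_subset_isCompact (isCompact_closedBall 0 ρ) hZρ
  have hz₀ρ : (‖z₀‖₊ : ℝ≥0∞) ≤ ρ := by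
    simpa [← NNReal.coe_le_coe] using mem_closedBall_zero_iff.mp hz₀
  -- the expansion at `z₀` converges on a ball of radius `P.radius - ‖z₀‖ > ‖z₀‖`, which contains `0`
  have hz₀r : (‖z₀‖₊ : ℝ≥0∞) + ‖z₀‖₊ < P.radius :=
    lt_of_le_of_lt (by rw [two_mul]; gcongr) hρ
  have hP := P.hasFPowerSeriesOnBall (pos_of_gt hρ)
  have hQ := hP.changeOrigin (lt_of_le_of_lt le_add_self hz₀r)
  rw [zero_add] at hQ
  have hloc : ∀ᶠ z in 𝓝 z₀, P.sum z = 0 :=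
    hQ.analyticAt.frequently_zero_iff_eventually_zero.mp
      ((accPt_iff_frequently_nhdsNE.mp hacc).mono hPZ)
  have hQ0 : P.changeOrigin z₀ = 0 := hQ.hasFPowerSeriesAt.eq_zero_of_eventually hloc
  have h0 : ∀ᶠ z in 𝓝 0, P.sum z = 0 := by
    have hball : eball z₀ (P.radius - ‖z₀‖₊) ∈ 𝓝 (0 : 𝕜) :=
      isOpen_eball.mem_nhds (by
        rw [mem_eball, edist_comm, edist_zero_right]
        exact lt_tsub_iff_left.mpr hz₀r)
    filter_upwards [hball] with z hz
    have hsum := hQ.hasSum (y := z - z₀) (by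
      rwa [mem_eball, edist_zero_right, ← edist_eq_enorm_sub])
    rw [hQ0, add_sub_cancel] at hsum
    exact hsum.unique (by simp)
  exact hP.hasFPowerSeriesAt.eq_zero_of_eventually h0

end FormalMultilinearSeries

namespace PadicInt

variable {p : ℕ} [Fact p.Prime]

theorem norm_le_norm_of_dvd {a b : ℤ_[p]} (h : a ∣ b) : ‖b‖ ≤ ‖a‖ := by
  obtain ⟨c, rfl⟩ := h
  rw [norm_mul]
  exact mul_le_of_le_one_right (norm_nonneg a) (norm_le_one c)

theorem norm_two_mul_p_lt_half : ‖(2 * p : ℤ_[p])‖ < 2⁻¹ := by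
  have hp := (Fact.out : p.Prime)
  rw [norm_mul, norm_p]
  by_cases hp2 : p = 2
  · subst hp2
    have : ‖(2 : ℤ_[2])‖ = 2⁻¹ := by exact_mod_cast norm_p (p := 2)
    rw [this]
    norm_num
  · have h2p : (2 : ℝ) < p := by exact_mod_cast hp.two_le.lt_of_ne' hp2
    calc ‖(2 : ℤ_[p])‖ * (p : ℝ)⁻¹ ≤ (p : ℝ)⁻¹ :=
          mul_le_of_le_one_left (by positivity) (norm_le_one _)
      _ < 2⁻¹ := inv_strictAnti₀ two_pos h2p

theorem p_dvd_natCast_iff {m : ℕ} : (p : ℤ_[p]) ∣ (m : ℤ_[p]) ↔ p ∣ m := by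
  rw [← norm_lt_one_iff_dvd, norm_natCast_lt_one_iff]

theorem geom_sum_ne_zero_of_not_dvd {u : ℤ_[p]} (hu : (p : ℤ_[p]) ∣ u - 1) {m : ℕ}
    (hm : ¬p ∣ m) : ∑ i ∈ range m, u ^ i ≠ 0 := by
  intro h
  have := (dvd_geom_sum₂_iff_of_dvd_sub (n := m) hu).mp (by simp [h])
  rw [one_pow, mul_one, p_dvd_natCast_iff] at this
  exact hm this

theorem sq_dvd_geom_sum_sub {u : ℤ_[p]} (hu : (2 * p : ℤ_[p]) ∣ u - 1) :
    (p : ℤ_[p]) ^ 2 ∣ ∑ i ∈ range p, u ^ i - p := by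
  obtain ⟨s, hs⟩ := hu
  have hu' : u = 1 + 2 * p * s := by linear_combination hs
  -- `u ^ i ≡ 1 + i (u - 1)` modulo `(u - 1) ^ 2`, and `2 ∑_{i < p} i = p (p - 1)`
  have hterm : ∀ i : ℕ, (p : ℤ_[p]) ^ 2 ∣ u ^ i - 1 - i * (2 * p * s) := fun i => by
    have h := sq_dvd_add_pow_sub_sub (2 * p * s) (1 : ℤ_[p]) i
    rw [one_pow, one_pow, one_mul, ← hu'] at h
    refine (Dvd.intro ((2 * s) ^ 2) ?_).trans (by convert h using 1; ring)
    ring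
  have hlin : ∑ i ∈ range p, (i : ℤ_[p]) * (2 * p * s) = p ^ 2 * ((p - 1 : ℕ) * s) := by
    rw [← sum_mul]
    have := congrArg (Nat.cast (R := ℤ_[p])) (sum_range_id_mul_two p)
    push_cast at this
    linear_combination (p * s) * this
  have hsplit : ∑ i ∈ range p, u ^ i - p
      = ∑ i ∈ range p, (u ^ i - 1 - i * (2 * p * s)) + p ^ 2 * ((p - 1 : ℕ) * s) := by
    rw [← hlin, ← sum_add_distrib]
    simp
  rw [hsplit]
  exact dvd_add (dvd_sum fun i _ => hterm i) (dvd_mul_right _ _)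

theorem geom_sum_p_ne_zero {u : ℤ_[p]} (hu : (2 * p : ℤ_[p]) ∣ u - 1) :
    ∑ i ∈ range p, u ^ i ≠ 0 := by
  intro h
  have := sq_dvd_geom_sum_sub hu
  rw [h, zero_sub, dvd_neg, sq] at this
  exact prime_p.not_dvd_one ((mul_dvd_mul_iff_left prime_p.ne_zero).mp (by rwa [mul_one]))

theorem pow_ne_one {u : ℤ_[p]} (hu : (2 * p : ℤ_[p]) ∣ u - 1) (hu1 : u ≠ 1) {m : ℕ}
    (hm : m ≠ 0) : u ^ m ≠ 1 := by
  induction m using Nat.strong_induction_on generalizing u with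
  | _ m ih =>
  have hu1' : u - 1 ≠ 0 := sub_ne_zero.mpr hu1
  by_cases hpm : p ∣ m
  · obtain ⟨m', rfl⟩ := hpm
    have hup : u ^ p - 1 = (∑ i ∈ range p, u ^ i) * (u - 1) := (geom_sum_mul u p).symm
    rw [pow_mul]
    refine ih m' ?_ (hu.trans ⟨_, hup.trans (mul_comm _ _)⟩) ?_ (right_ne_zero_of_mul hm)
    · exact lt_mul_left (Nat.pos_of_ne_zero (right_ne_zero_of_mul hm)) (Fact.out : p.Prime).one_lt
    · rw [← sub_ne_zero, hup]
      exact mul_ne_zero (geom_sum_p_ne_zero hu) hu1'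
  · rw [← sub_ne_zero, ← geom_sum_mul]
    exact mul_ne_zero (geom_sum_ne_zero_of_not_dvd ((dvd_mul_left _ _).trans hu) hpm) hu1'

theorem pow_injective {u : ℤ_[p]} (hu : (2 * p : ℤ_[p]) ∣ u - 1) (hu1 : u ≠ 1) :
    Function.Injective (u ^ · : ℕ → ℤ_[p]) := by
  have hu0 : u ≠ 0 := by
    rintro rfl
    exact prime_p.not_dvd_one (dvd_neg.mp (by simpa using (dvd_mul_left _ _).trans hu))
  refine .of_lt_imp_ne fun a b hab heq => pow_ne_one hu hu1 (Nat.sub_ne_zero_of_lt hab) ?_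
  apply mul_left_cancel₀ (pow_ne_zero a hu0)
  rw [← pow_add, Nat.add_sub_cancel' hab.le, mul_one, heq]

theorem summable_coeff_mul_pow (H : PowerSeries ℤ_[p]) {z : ℤ_[p]} (hz : ‖z‖ < 1) :
    Summable fun n => PowerSeries.coeff n H * z ^ n := by
  refine .of_norm_bounded (summable_geometric_of_lt_one (norm_nonneg z) hz) fun n => ?_
  rw [norm_mul, norm_pow]
  exact mul_le_of_le_one_left (by positivity) (norm_le_one _)

noncomputable def ofPowerSeries (H : PowerSeries ℤ_[p]) :
    FormalMultilinearSeries ℚ_[p] ℚ_[p] ℚ_[p] :=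
  .ofScalars ℚ_[p] fun n => ((PowerSeries.coeff n H : ℤ_[p]) : ℚ_[p])

theorem one_le_radius_ofPowerSeries (H : PowerSeries ℤ_[p]) :
    1 ≤ (ofPowerSeries H).radius := by
  have := (ofPowerSeries H).le_radius_of_bound 1 (r := 1) fun n => by
    rw [ofPowerSeries, FormalMultilinearSeries.ofScalars_norm, NNReal.coe_one, one_pow, mul_one]
    exact norm_le_one _
  exact_mod_cast this

theorem ofPowerSeries_sum_coe (H : PowerSeries ℤ_[p]) {z : ℤ_[p]} (hz : ‖z‖ < 1) :
    (ofPowerSeries H).sum z = ((∑' n, PowerSeries.coeff n H * z ^ n : ℤ_[p]) : ℚ_[p]) := by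
  simp only [ofPowerSeries, FormalMultilinearSeries.sum, FormalMultilinearSeries.ofScalars_apply_eq,
    smul_eq_mul]
  exact ((summable_coeff_mul_pow H hz).hasSum.map Coe.ringHom continuous_subtype_val).tsum_eq

theorem ofPowerSeries_eq_zero_iff {H : PowerSeries ℤ_[p]} : ofPowerSeries H = 0 ↔ H = 0 := by
  rw [ofPowerSeries, FormalMultilinearSeries.ofScalars_series_eq_zero, funext_iff,
    PowerSeries.ext_iff]
  simp

end PadicInt

/-- identity principle. If `2p ∣ u − 1`, `u ≠ 1`, and two power series
`F, G` over `ℤ_p` satisfy `F(u^k − 1) = G(u^k − 1)` (sums of the convergent series)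
for infinitely many `k : ℕ`, then `F = G`. -/
theorem stmt10 (p : ℕ) [Fact p.Prime] (u : ℤ_[p]) (hu : (2 * p : ℤ_[p]) ∣ u - 1)
    (hu1 : u ≠ 1) (F G : PowerSeries ℤ_[p])
    (h : {k : ℕ | (∑' n : ℕ, PowerSeries.coeff n F * (u ^ k - 1) ^ n) =
        ∑' n : ℕ, PowerSeries.coeff n G * (u ^ k - 1) ^ n}.Infinite) :
    F = G := by
  have hnorm (k : ℕ) : ‖u ^ k - 1‖ ≤ ‖(2 * p : ℤ_[p])‖ :=
    PadicInt.norm_le_norm_of_dvd (hu.trans (sub_one_dvd_pow_sub_one u k))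
  have hlt (k : ℕ) : ‖u ^ k - 1‖ < 1 :=
    (hnorm k).trans_lt (PadicInt.norm_two_mul_p_lt_half.trans (by norm_num))
  have hρ : 2 * (‖(2 * p : ℤ_[p])‖₊ : ℝ≥0∞) < 1 := by
    have : 2 * ‖(2 * p : ℤ_[p])‖₊ < 1 := by
      rw [← NNReal.coe_lt_coe]
      push_cast
      linarith [PadicInt.norm_two_mul_p_lt_half (p := p)]
    exact_mod_cast this
  rw [← sub_eq_zero, ← PadicInt.ofPowerSeries_eq_zero_iff]
  refine (PadicInt.ofPowerSeries (F - G)).eq_zero_of_infinite_zeros (ρ := ‖(2 * p : ℤ_[p])‖₊)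
    (hρ.trans_le (PadicInt.one_le_radius_ofPowerSeries _))
    (h.image (f := fun k => ((u ^ k - 1 : ℤ_[p]) : ℚ_[p])) fun a _ b _ hab =>
      PadicInt.pow_injective hu hu1 (sub_left_injective (b := (1 : ℤ_[p]))
        (Subtype.coe_injective hab))) ?_ ?_
  · rintro _ ⟨k, -, rfl⟩
    exact mem_closedBall_zero_iff.mpr (hnorm k)
  · rintro _ ⟨k, hk, rfl⟩
    rw [PadicInt.ofPowerSeries_sum_coe _ (hlt k)]
    simp only [map_sub, sub_mul]
    rw [(PadicInt.summable_coeff_mul_pow F (hlt k)).tsum_sub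
      (PadicInt.summable_coeff_mul_pow G (hlt k)), hk, sub_self, PadicInt.coe_zero]
end
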